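/- Let χ be a bicharacter on ℤ^I with values in 𝕜∖{0}, p ∈ I and i ∈ I∖{p}. Then in the free algebra 𝒰^+(χ), for all m ∈ ℕ₀: E^+_{i,m} = Σ_{s=0}^m (−1)^s q_{pi}^s q_{pp}^{s(s−1)/2} C(m,s)_{q_pp} E_p^{m−s} E_i E_p^s and E^−_{i,m} = Σ_{s=0}^m (−1)^s q_{ip}^{−s} q_{pp}^{−s(s−1)/2} C(m,s)_{q_pp^{−1}} E_p^{m−s} E_i E_p^s. -/
import Mathlib


/-- The quantum integer `[n]_q = 1 + q + ⋯ + q^{n-1}` for `n ∈ ℕ`. -/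
def qNat {𝕜 : Type*} [Field 𝕜] (q : 𝕜) (n : ℕ) : 𝕜 :=
  ∑ i ∈ Finset.range n, q ^ i

/-- The quantum factorial `[n]_q! = [1]_q [2]_q ⋯ [n]_q`. -/
def qFact {𝕜 : Type*} [Field 𝕜] (q : 𝕜) (n : ℕ) : 𝕜 :=
  ∏ i ∈ Finset.range n, qNat q (i + 1)

variable {𝕜 : Type*} [Field 𝕜] {I : Type*} [Fintype I] [DecidableEq I]

/-- The standard basis vector `ε_i` of `ℤ^I`. -/
def eps (i : I) : I → ℤ := Pi.single i 1

/-- `χ : ℤ^I × ℤ^I → 𝕜∖{0}` is a bicharacter. -/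
def IsBichar (χ : (I → ℤ) → (I → ℤ) → 𝕜) : Prop :=
  (∀ a b c : I → ℤ, χ (a + b) c = χ a c * χ b c) ∧
  (∀ c a b : I → ℤ, χ c (a + b) = χ c a * χ c b) ∧
  (∀ a b : I → ℤ, χ a b ≠ 0)

/-- `χ` is `p`-finite: for every `j ≠ p` there is `m ∈ ℕ₀` with
`[m+1]_{q_{pp}} = 0` or `q_{pp}^m q_{pj} q_{jp} = 1`. -/
def IsPFinite (χ : (I → ℤ) → (I → ℤ) → 𝕜) (p : I) : Prop :=
  ∀ j, j ≠ p → ∃ m : ℕ,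
    qNat (χ (eps p) (eps p)) (m + 1) = 0 ∨
    χ (eps p) (eps p) ^ m * χ (eps p) (eps j) * χ (eps j) (eps p) = 1

open Classical in
/-- The Cartan integers `c^χ_{pj}` of a (`p`-finite) bicharacter `χ`. -/
noncomputable def cartan (χ : (I → ℤ) → (I → ℤ) → 𝕜) (p j : I) : ℤ :=
  if p = j then 2
  else if h : ∃ m : ℕ,
      qNat (χ (eps p) (eps p)) (m + 1) = 0 ∨
      χ (eps p) (eps p) ^ m * χ (eps p) (eps j) * χ (eps j) (eps p) = 1
    then -(Nat.find h) else 0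

/-- The reflection `σ_p^χ ∈ Aut(ℤ^I)`, `σ_p^χ(ε_j) = ε_j − c^χ_{pj} ε_p`
(an involution, so equal to its own inverse). -/
noncomputable def sigmaChi (χ : (I → ℤ) → (I → ℤ) → 𝕜) (p : I) (a : I → ℤ) : I → ℤ :=
  a - (∑ j, cartan χ p j * a j) • eps p

/-- `r_p(χ) = (σ_p^χ)^*χ`, i.e. `r_p(χ)(a,b) = χ((σ_p^χ)⁻¹ a, (σ_p^χ)⁻¹ b)`. -/
noncomputable def rp (χ : (I → ℤ) → (I → ℤ) → 𝕜) (p : I) :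
    (I → ℤ) → (I → ℤ) → 𝕜 :=
  fun a b => χ (sigmaChi χ p a) (sigmaChi χ p b)

/-- The general recursion `Y_0 = Y`, `Y_{m+1} = X Y_m − α β^m Y_m X` in a
`𝕜`-algebra; with `X = E_p`, `Y = E_i`, `α = q_{pi}`, `β = q_{pp}` this gives
the elements `E^+_{i,m}`, and with `α = q_{ip}⁻¹`, `β = q_{pp}⁻¹` the elements
`E^−_{i,m}`. -/
def recE {A : Type*} [Ring A] [Algebra 𝕜 A] (α β : 𝕜) (X Y : A) : ℕ → A
  | 0 => Y
  | m + 1 => X * recE α β X Y m - (α * β ^ m) • (recE α β X Y m * X)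

/-- The Gaussian binomial coefficient `C(m,n)_q`. -/
def qBinom (q : 𝕜) : ℕ → ℤ → 𝕜
  | 0, n => if n = 0 then 1 else 0
  | m + 1, n => qBinom q m (n - 1) + q ^ n * qBinom q m n

lemma qBinom_zero_of_neg (q : 𝕜) : ∀ m : ℕ, ∀ n : ℤ, n < 0 → qBinom q m n = 0 := by
  intro m
  induction m with
  | zero => intro n hn; simp [qBinom]; omega
  | succ m ih =>
      intro n hn
      simp [qBinom, ih (n-1) (by omega), ih n hn]

lemma qBinom_zero_of_gt (q : 𝕜) : ∀ m : ℕ, ∀ n : ℤ, (m : ℤ) < n → qBinom q m n = 0 := by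
  intro m
  induction m with
  | zero => intro n hn; simp [qBinom]; omega
  | succ m ih =>
      intro n hn
      simp [qBinom, ih (n-1) (by push_cast at hn ⊢; omega), ih n (by push_cast at hn ⊢; omega)]

lemma qBinom_pascal' (q : 𝕜) (hq : q ≠ 0) :
    ∀ m : ℕ, ∀ n : ℤ, qBinom q (m+1) n
      = q ^ ((m : ℤ) + 1 - n) * qBinom q m (n - 1) + qBinom q m n := by
  intro m
  induction m with
  | zero =>
      intro n
      by_cases h0 : n = 0
      · simp [h0, qBinom]
      · by_cases h1 : n = 1
        · simp [h1, qBinom]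
        · simp [qBinom, h0, h1, sub_eq_zero]
  | succ m ih =>
      intro n
      have hL : qBinom q (m+1+1) n
          = (q ^ ((m:ℤ)+2-n) * qBinom q m (n-2) + qBinom q m (n-1))
            + q ^ n * (q ^ ((m:ℤ)+1-n) * qBinom q m (n-1) + qBinom q m n) := by
        show qBinom q (m+1) (n-1) + q ^ n * qBinom q (m+1) n = _
        rw [ih (n-1), ih n, show n-1-1 = n-2 from by ring,
          show (m:ℤ)+1-(n-1) = (m:ℤ)+2-n from by ring]
      have hR1 : qBinom q (m+1) (n-1) = qBinom q m (n-2) + q ^ (n-1) * qBinom q m (n-1) := by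
        show qBinom q m (n-1-1) + q ^ (n-1) * qBinom q m (n-1) = _
        rw [show n-1-1 = n-2 from by ring]
      have hR2 : qBinom q (m+1) n = qBinom q m (n-1) + q ^ n * qBinom q m n := rfl
      rw [hL, hR1, hR2, show ((m+1:ℕ):ℤ)+1-n = (m:ℤ)+2-n from by push_cast; ring]
      have hz : q ^ ((m:ℤ)+2-n) * q ^ (n-1) = q ^ ((m:ℤ)+1) := by
        rw [← zpow_add₀ hq]; ring_nf
      have hz2 : (q ^ n : 𝕜) * q ^ ((m:ℤ)+1-n) = q ^ ((m:ℤ)+1) := by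
        rw [← zpow_add₀ hq]; ring_nf
      linear_combination qBinom q m (n-1) * hz2 - qBinom q m (n-1) * hz

lemma tri_succ (t : ℕ) : (t+1) * t / 2 = t * (t-1) / 2 + t := by
  cases t with
  | zero => simp
  | succ s =>
      simp only [Nat.add_sub_cancel]
      rw [show (s+1+1) * (s+1) = (s+1)*s + (s+1)*2 from by ring,
        Nat.add_mul_div_right _ _ (by norm_num)]

lemma recE_eq {A : Type*} [Ring A] [Algebra 𝕜 A] (α β : 𝕜) (hβ : β ≠ 0) (X Y : A) (m : ℕ) :
    recE α β X Y m = ∑ s ∈ Finset.range (m+1),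
      ((-1:𝕜)^s * α^s * β^(s*(s-1)/2) * qBinom β m (s:ℤ)) • (X^(m-s) * Y * X^s) := by
  induction m with
  | zero => simp [recE, qBinom]
  | succ m ih =>
      have key : ∀ s ∈ Finset.range (m+2),
          ((-1:𝕜)^s * α^s * β^(s*(s-1)/2) * qBinom β (m+1) (s:ℤ))
          = ((-1:𝕜)^s * α^s * β^(s*(s-1)/2) * qBinom β m (s:ℤ))
            - (if s = 0 then 0 else
                α * β^m * ((-1:𝕜)^(s-1) * α^(s-1) * β^((s-1)*(s-1-1)/2) * qBinom β m ((s:ℤ)-1))) := by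
        intro s hs
        simp only [Finset.mem_range] at hs
        cases s with
        | zero =>
            simp [qBinom, qBinom_zero_of_neg β m (-1) (by norm_num)]
        | succ t =>
            have ht : t ≤ m := by omega
            simp only [Nat.add_sub_cancel, if_neg (Nat.succ_ne_zero t)]
            rw [show ((t+1:ℕ):ℤ) = (t:ℤ)+1 from by push_cast; ring,
              qBinom_pascal' β hβ m ((t:ℤ)+1)]
            rw [show (m:ℤ)+1-((t:ℤ)+1) = ((m-t:ℕ):ℤ) from by push_cast [Nat.cast_sub ht]; ring,
              zpow_natCast, show (t:ℤ)+1-1 = (t:ℤ) from by ring]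
            have he : β^((t+1)*t/2) * β^(m-t) = β^m * β^(t*(t-1)/2) := by
              rw [← pow_add, ← pow_add, tri_succ t]
              congr 1
              omega
            linear_combination ((-1:𝕜))^(t+1) * α^(t+1) * qBinom β m (t:ℤ) * he
      -- rewrite the target using key
      rw [Finset.sum_congr rfl (fun s hs => by rw [key s hs])]
      simp only [sub_smul, ite_smul, zero_smul]
      rw [Finset.sum_sub_distrib]
      -- first sum over range (m+2) equals extension of sum over range (m+1)
      have h1 : ∑ s ∈ Finset.range (m+2),
          ((-1:𝕜)^s * α^s * β^(s*(s-1)/2) * qBinom β m (s:ℤ)) • (X^(m+1-s) * Y * X^s)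
          = X * recE α β X Y m := by
        rw [Finset.sum_range_succ, qBinom_zero_of_gt β m ((m+1:ℕ):ℤ) (by push_cast; omega)]
        simp only [mul_zero, zero_smul, add_zero]
        rw [ih, Finset.mul_sum]
        refine Finset.sum_congr rfl fun s hs => ?_
        simp only [Finset.mem_range] at hs
        rw [mul_smul_comm]
        congr 1
        rw [show m+1-s = (m-s)+1 from by omega, pow_succ']
        simp only [mul_assoc]
      have h2 : ∑ s ∈ Finset.range (m+2),
          (if s = 0 then (0:A) else
            (α * β^m * ((-1:𝕜)^(s-1) * α^(s-1) * β^((s-1)*(s-1-1)/2) * qBinom β m ((s:ℤ)-1)))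
              • (X^(m+1-s) * Y * X^s))
          = (α * β^m) • (recE α β X Y m * X) := by
        rw [Finset.sum_range_succ']
        simp only [if_neg (Nat.succ_ne_zero _), reduceIte, add_zero, Nat.add_sub_cancel]
        rw [ih, Finset.sum_mul]
        simp only [smul_mul_assoc]
        rw [Finset.smul_sum]
        refine Finset.sum_congr rfl fun s hs => ?_
        simp only [Finset.mem_range] at hs
        rw [smul_smul, show ((s+1:ℕ):ℤ) - 1 = (s:ℤ) from by push_cast; ring,
          show m+1-(s+1) = m-s from by omega, pow_succ]
        simp only [mul_assoc]
      rw [show (recE α β X Y (m+1) : A)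
          = X * recE α β X Y m - (α * β^m) • (recE α β X Y m * X) from rfl, h1, h2]

open FreeAlgebra in
/-- Eqs. (eq:Eim+), (eq:Eim-): the closed formulas for `E^±_{i,m}` in the free
algebra `𝒰^+(χ)`. -/
theorem Epm_explicit (χ : (I → ℤ) → (I → ℤ) → 𝕜) (hχ : IsBichar χ)
    (p i : I) (hip : i ≠ p) (m : ℕ) :
    recE (χ (eps p) (eps i)) (χ (eps p) (eps p)) (ι 𝕜 p) (ι 𝕜 i) m =
      ∑ s ∈ Finset.range (m + 1),
        ((-1 : 𝕜) ^ s * χ (eps p) (eps i) ^ s *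
            χ (eps p) (eps p) ^ (s * (s - 1) / 2) *
            qBinom (χ (eps p) (eps p)) m (s : ℤ)) •
          (ι 𝕜 p ^ (m - s) * ι 𝕜 i * ι 𝕜 p ^ s) ∧
    recE (χ (eps i) (eps p))⁻¹ (χ (eps p) (eps p))⁻¹ (ι 𝕜 p) (ι 𝕜 i) m =
      ∑ s ∈ Finset.range (m + 1),
        ((-1 : 𝕜) ^ s * ((χ (eps i) (eps p))⁻¹) ^ s *
            (χ (eps p) (eps p) ^ (s * (s - 1) / 2))⁻¹ *
            qBinom (χ (eps p) (eps p))⁻¹ m (s : ℤ)) •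
          (ι 𝕜 p ^ (m - s) * ι 𝕜 i * ι 𝕜 p ^ s) := by
  constructor
  · exact recE_eq _ _ (hχ.2.2 (eps p) (eps p)) _ _ m
  · rw [recE_eq _ _ (inv_ne_zero (hχ.2.2 (eps p) (eps p))) (ι 𝕜 p) (ι 𝕜 i) m]
    simp only [inv_pow]
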